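/- For all x, y ∈ ℝ₊ⁿ, 4·JS(x,y) ≤ ρ(x,y)² ≤ (4/ln 2)·JS(x,y), where JS(x,y) = ½ ∑_i ( x_i ln(2x_i/(x_i+y_i)) + y_i ln(2y_i/(x_i+y_i)) ) and ρ(x,y)² = 2 ∑_i (√x_i − √y_i)². -/

import Mathlib

/-!
With `s = a + b` and `d = (a - b) / s`, the coordinate terms are
`a log (2a/s) + b log (2b/s) = (s/2) F(d)` and `(√a - √b)² = (s/2) G(d)` for `F = jsProfile` and
`G = hellingerProfile`, so it suffices to show `log 2 · G ≤ F ≤ G` on `[-1, 1]`.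
Every `F - c G` vanishes together with its derivative at `0`, and its second derivative
`2 (√(1-d²) - c) / (1-d²)^(3/2)` has the sign of `√(1-d²) - c`. For `c = 1` it is concave, so
`F - G ≤ 0`. For `c = log 2` it is convex on `d² ≤ 1 - log² 2`, hence nonnegative there, and
concave on the two remaining pieces, whose far endpoints `±1` are where it vanishes again:
`F (±1) = 2 log 2 = log 2 · G (±1)`.
-/

open Real Set

theorem ConvexOn.isMinOn_of_hasDerivAt_eq_zero {S : Set ℝ} {f : ℝ → ℝ} {x : ℝ}
    (hf : ConvexOn ℝ S f) (hx : x ∈ interior S) (hd : HasDerivAt f 0 x) : IsMinOn f S x :=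
  hf.isMinOn_of_rightDeriv_eq_zero hx (hd.hasDerivWithinAt.derivWithin (uniqueDiffWithinAt_Ioi x))

theorem ConcaveOn.isMaxOn_of_hasDerivAt_eq_zero {S : Set ℝ} {f : ℝ → ℝ} {x : ℝ}
    (hf : ConcaveOn ℝ S f) (hx : x ∈ interior S) (hd : HasDerivAt f 0 x) : IsMaxOn f S x := by
  simpa using (hf.neg.isMinOn_of_hasDerivAt_eq_zero hx (by simpa using hd.neg)).neg

noncomputable def jsProfile (d : ℝ) : ℝ := (1 + d) * log (1 + d) + (1 - d) * log (1 - d)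

noncomputable def hellingerProfile (d : ℝ) : ℝ := 2 - 2 * √(1 - d ^ 2)

theorem continuous_jsProfile : Continuous jsProfile :=
  (continuous_mul_log.comp (continuous_const.add continuous_id)).add
    (continuous_mul_log.comp (continuous_const.sub continuous_id))

theorem continuous_hellingerProfile : Continuous hellingerProfile := by
  unfold hellingerProfile; fun_prop

theorem hasDerivAt_jsProfile {d : ℝ} (hd : d ∈ Ioo (-1 : ℝ) 1) :
    HasDerivAt jsProfile (log (1 + d) - log (1 - d)) d := by
  have hp : 1 + d ≠ 0 := by linarith [hd.1]
  have hm : 1 - d ≠ 0 := by linarith [hd.2]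
  have hplus := (hasDerivAt_mul_log hp).comp d ((hasDerivAt_id d).const_add 1)
  have hminus := (hasDerivAt_mul_log hm).comp d ((hasDerivAt_id d).const_sub 1)
  exact (hplus.add hminus).congr_deriv (by ring)

theorem hasDerivAt_log_one_add_sub_log_one_sub {d : ℝ} (hd : d ∈ Ioo (-1 : ℝ) 1) :
    HasDerivAt (fun t => log (1 + t) - log (1 - t)) (2 / (1 - d ^ 2)) d := by
  have hp : 1 + d ≠ 0 := by linarith [hd.1]
  have hm : 1 - d ≠ 0 := by linarith [hd.2]
  refine ((((hasDerivAt_id d).const_add 1).log hp).sub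
    (((hasDerivAt_id d).const_sub 1).log hm)).congr_deriv ?_
  rw [id, show 1 - d ^ 2 = (1 + d) * (1 - d) by ring]
  field_simp
  ring

theorem hasDerivAt_sqrt_one_sub_sq {d : ℝ} (hd : d ∈ Ioo (-1 : ℝ) 1) :
    HasDerivAt (fun t => √(1 - t ^ 2)) (-d / √(1 - d ^ 2)) d := by
  have hpos : 0 < 1 - d ^ 2 := by nlinarith [hd.1, hd.2]
  refine (((hasDerivAt_pow 2 d).const_sub 1).sqrt hpos.ne').congr_deriv ?_
  field_simp
  ring

theorem hasDerivAt_hellingerProfile {d : ℝ} (hd : d ∈ Ioo (-1 : ℝ) 1) :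
    HasDerivAt hellingerProfile (2 * (d / √(1 - d ^ 2))) d :=
  (((hasDerivAt_sqrt_one_sub_sq hd).const_mul 2).const_sub 2).congr_deriv (by ring)

theorem hasDerivAt_div_sqrt_one_sub_sq {d : ℝ} (hd : d ∈ Ioo (-1 : ℝ) 1) :
    HasDerivAt (fun t => t / √(1 - t ^ 2)) (1 / √(1 - d ^ 2) ^ 3) d := by
  have hpos : 0 < 1 - d ^ 2 := by nlinarith [hd.1, hd.2]
  have hc := sqrt_pos.2 hpos
  refine ((hasDerivAt_id d).div (hasDerivAt_sqrt_one_sub_sq hd) hc.ne').congr_deriv ?_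
  rw [id]
  field_simp
  linear_combination sq_sqrt hpos.le

noncomputable def jsHellingerGap (c d : ℝ) : ℝ := jsProfile d - c * hellingerProfile d

theorem continuous_jsHellingerGap (c : ℝ) : Continuous (jsHellingerGap c) :=
  continuous_jsProfile.sub (continuous_const.mul continuous_hellingerProfile)

theorem hasDerivAt_jsHellingerGap (c : ℝ) {d : ℝ} (hd : d ∈ Ioo (-1 : ℝ) 1) :
    HasDerivAt (jsHellingerGap c)
      (log (1 + d) - log (1 - d) - c * (2 * (d / √(1 - d ^ 2)))) d :=
  (hasDerivAt_jsProfile hd).sub ((hasDerivAt_hellingerProfile hd).const_mul c)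

theorem hasDerivAt_deriv_jsHellingerGap (c : ℝ) {d : ℝ} (hd : d ∈ Ioo (-1 : ℝ) 1) :
    HasDerivAt (fun t => log (1 + t) - log (1 - t) - c * (2 * (t / √(1 - t ^ 2))))
      (2 * (√(1 - d ^ 2) - c) / √(1 - d ^ 2) ^ 3) d := by
  have hpos : 0 < 1 - d ^ 2 := by nlinarith [hd.1, hd.2]
  have hs := sqrt_pos.2 hpos
  refine ((hasDerivAt_log_one_add_sub_log_one_sub hd).sub
    (((hasDerivAt_div_sqrt_one_sub_sq hd).const_mul 2).const_mul c)).congr_deriv ?_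
  rw [show 2 / (1 - d ^ 2) = 2 / √(1 - d ^ 2) ^ 2 by rw [sq_sqrt hpos.le]]
  field_simp

theorem jsHellingerGap_zero (c : ℝ) : jsHellingerGap c 0 = 0 := by
  simp [jsHellingerGap, jsProfile, hellingerProfile]

theorem hasDerivAt_jsHellingerGap_zero (c : ℝ) : HasDerivAt (jsHellingerGap c) 0 0 := by
  simpa using hasDerivAt_jsHellingerGap c (d := 0) (by norm_num)

theorem convexOn_jsHellingerGap {c : ℝ} {S : Set ℝ} (hS : Convex ℝ S)
    (hS₁ : interior S ⊆ Ioo (-1) 1) (hc : ∀ d ∈ interior S, c ≤ √(1 - d ^ 2)) :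
    ConvexOn ℝ S (jsHellingerGap c) := by
  refine convexOn_of_hasDerivWithinAt2_nonneg hS (continuous_jsHellingerGap c).continuousOn
    (fun d hd => (hasDerivAt_jsHellingerGap c (hS₁ hd)).hasDerivWithinAt)
    (fun d hd => (hasDerivAt_deriv_jsHellingerGap c (hS₁ hd)).hasDerivWithinAt)
    (fun d hd => ?_)
  have := sub_nonneg.2 (hc d hd)
  positivity

theorem concaveOn_jsHellingerGap {c : ℝ} {S : Set ℝ} (hS : Convex ℝ S)
    (hS₁ : interior S ⊆ Ioo (-1) 1) (hc : ∀ d ∈ interior S, √(1 - d ^ 2) ≤ c) :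
    ConcaveOn ℝ S (jsHellingerGap c) := by
  refine concaveOn_of_hasDerivWithinAt2_nonpos hS (continuous_jsHellingerGap c).continuousOn
    (fun d hd => (hasDerivAt_jsHellingerGap c (hS₁ hd)).hasDerivWithinAt)
    (fun d hd => (hasDerivAt_deriv_jsHellingerGap c (hS₁ hd)).hasDerivWithinAt)
    (fun d hd => ?_)
  exact div_nonpos_of_nonpos_of_nonneg (by linarith [hc d hd]) (by positivity)

theorem jsProfile_le_hellingerProfile {d : ℝ} (hd : d ∈ Icc (-1 : ℝ) 1) :
    jsProfile d ≤ hellingerProfile d := by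
  have hconc : ConcaveOn ℝ (Icc (-1) 1) (jsHellingerGap 1) :=
    concaveOn_jsHellingerGap (convex_Icc _ _) (by rw [interior_Icc])
      (fun t _ => sqrt_le_one.2 (by nlinarith))
  have hmax := hconc.isMaxOn_of_hasDerivAt_eq_zero (by rw [interior_Icc]; norm_num)
    (hasDerivAt_jsHellingerGap_zero 1)
  have : jsHellingerGap 1 d ≤ jsHellingerGap 1 0 := hmax hd
  rwa [jsHellingerGap_zero, jsHellingerGap, one_mul, sub_nonpos] at this

theorem jsHellingerGap_log_two_one : jsHellingerGap (log 2) 1 = 0 := by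
  norm_num [jsHellingerGap, jsProfile, hellingerProfile]; ring

theorem jsHellingerGap_log_two_neg_one : jsHellingerGap (log 2) (-1) = 0 := by
  norm_num [jsHellingerGap, jsProfile, hellingerProfile]; ring

theorem jsHellingerGap_log_two_nonneg_of_sq_le {t : ℝ} (ht : t ^ 2 ≤ 1 - log 2 ^ 2) :
    0 ≤ jsHellingerGap (log 2) t := by
  set r := √(1 - log 2 ^ 2)
  have hr₀ : 0 < r := sqrt_pos.2 (by nlinarith [log_two_lt_d9, log_two_gt_d9])
  have hr_sq : r ^ 2 = 1 - log 2 ^ 2 := sq_sqrt (by nlinarith)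
  have hconv : ConvexOn ℝ (Icc (-r) r) (jsHellingerGap (log 2)) := by
    refine convexOn_jsHellingerGap (convex_Icc _ _) ?_ ?_ <;> rw [interior_Icc]
    · exact Ioo_subset_Ioo (by nlinarith) (by nlinarith)
    · intro s hs
      exact le_sqrt_of_sq_le (by nlinarith [hs.1, hs.2])
  have hmin := hconv.isMinOn_of_hasDerivAt_eq_zero
    (by rw [interior_Icc]; exact ⟨neg_neg_of_pos hr₀, hr₀⟩) (hasDerivAt_jsHellingerGap_zero _)
  have : jsHellingerGap (log 2) 0 ≤ jsHellingerGap (log 2) t := hmin (abs_le.1 (abs_le_sqrt ht))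
  rwa [jsHellingerGap_zero] at this

theorem log_two_mul_hellingerProfile_le_jsProfile {d : ℝ} (hd : d ∈ Icc (-1 : ℝ) 1) :
    log 2 * hellingerProfile d ≤ jsProfile d := by
  rw [← sub_nonneg]
  change 0 ≤ jsHellingerGap (log 2) d
  set r := √(1 - log 2 ^ 2)
  have hr_sq : r ^ 2 = 1 - log 2 ^ 2 := sq_sqrt (by nlinarith [log_two_lt_d9, log_two_gt_d9])
  have hr₀ : 0 ≤ r := sqrt_nonneg _
  have hr₁ : r ≤ 1 := sqrt_le_one.2 (by nlinarith)
  have hnonneg_r : 0 ≤ jsHellingerGap (log 2) r := jsHellingerGap_log_two_nonneg_of_sq_le hr_sq.le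
  have hnonneg_neg_r : 0 ≤ jsHellingerGap (log 2) (-r) :=
    jsHellingerGap_log_two_nonneg_of_sq_le (by rw [neg_sq, hr_sq])
  have hconcave : ∀ a b, -1 ≤ a → b ≤ 1 → (r ≤ a ∨ b ≤ -r) → ∀ t ∈ Icc a b,
      min (jsHellingerGap (log 2) a) (jsHellingerGap (log 2) b) ≤ jsHellingerGap (log 2) t := by
    intro a b ha hb hab t ht
    have hab' : a ≤ b := ht.1.trans ht.2
    refine (concaveOn_jsHellingerGap (convex_Icc a b) ?_ ?_).ge_on_segment
      (left_mem_Icc.2 hab') (right_mem_Icc.2 hab') (by rwa [segment_eq_Icc hab'])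
      <;> rw [interior_Icc]
    · exact Ioo_subset_Ioo ha hb
    · intro s hs
      refine (sqrt_le_left (log_pos one_lt_two).le).2 ?_
      rcases hab with h | h <;> nlinarith [hs.1, hs.2, hr₀]
  rcases le_or_gt d (-r) with h | h
  · refine (le_min jsHellingerGap_log_two_neg_one.ge hnonneg_neg_r).trans ?_
    exact hconcave (-1) (-r) le_rfl (by linarith) (Or.inr le_rfl) d ⟨hd.1, h⟩
  rcases le_or_gt d r with h' | h'
  · exact jsHellingerGap_log_two_nonneg_of_sq_le (by nlinarith)
  · refine (le_min hnonneg_r jsHellingerGap_log_two_one.ge).trans ?_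
    exact hconcave r 1 (by linarith) le_rfl (Or.inl le_rfl) d ⟨h'.le, hd.2⟩

section Pair

variable {a b : ℝ}

theorem sub_div_add_mem_Icc (ha : 0 ≤ a) (hb : 0 ≤ b) : (a - b) / (a + b) ∈ Icc (-1 : ℝ) 1 := by
  rw [mem_Icc, ← abs_le, abs_div, abs_of_nonneg (add_nonneg ha hb)]
  exact div_le_one_of_le₀ (abs_sub_le_iff.2 ⟨by linarith, by linarith⟩) (add_nonneg ha hb)

theorem mul_log_add_mul_log_eq_jsProfile (ha : 0 ≤ a) (hb : 0 ≤ b) :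
    a * log (2 * a / (a + b)) + b * log (2 * b / (a + b))
      = (a + b) / 2 * jsProfile ((a - b) / (a + b)) := by
  rcases (add_nonneg ha hb).eq_or_lt with hs | hs
  · obtain ⟨rfl, rfl⟩ : a = 0 ∧ b = 0 := ⟨by linarith, by linarith⟩
    simp
  have h₁ : 1 + (a - b) / (a + b) = 2 * a / (a + b) := by field_simp; ring
  have h₂ : 1 - (a - b) / (a + b) = 2 * b / (a + b) := by field_simp; ring
  rw [jsProfile, h₁, h₂]
  field_simp

theorem sq_sqrt_sub_sqrt_eq_hellingerProfile (ha : 0 ≤ a) (hb : 0 ≤ b) :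
    (√a - √b) ^ 2 = (a + b) / 2 * hellingerProfile ((a - b) / (a + b)) := by
  rcases (add_nonneg ha hb).eq_or_lt with hs | hs
  · obtain ⟨rfl, rfl⟩ : a = 0 ∧ b = 0 := ⟨by linarith, by linarith⟩
    simp
  have h : 1 - ((a - b) / (a + b)) ^ 2 = (2 * √a * √b / (a + b)) ^ 2 := by
    field_simp
    rw [sq_sqrt ha, sq_sqrt hb]
    ring
  rw [hellingerProfile, h, sqrt_sq (by positivity)]
  field_simp
  linear_combination sq_sqrt ha + sq_sqrt hb

theorem log_two_mul_sq_sqrt_sub_sqrt_le (ha : 0 ≤ a) (hb : 0 ≤ b) :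
    log 2 * (√a - √b) ^ 2 ≤ a * log (2 * a / (a + b)) + b * log (2 * b / (a + b)) := by
  rw [mul_log_add_mul_log_eq_jsProfile ha hb, sq_sqrt_sub_sqrt_eq_hellingerProfile ha hb,
    mul_left_comm]
  exact mul_le_mul_of_nonneg_left
    (log_two_mul_hellingerProfile_le_jsProfile (sub_div_add_mem_Icc ha hb)) (by positivity)

theorem mul_log_add_mul_log_le_sq_sqrt_sub_sqrt (ha : 0 ≤ a) (hb : 0 ≤ b) :
    a * log (2 * a / (a + b)) + b * log (2 * b / (a + b)) ≤ (√a - √b) ^ 2 := by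
  rw [mul_log_add_mul_log_eq_jsProfile ha hb, sq_sqrt_sub_sqrt_eq_hellingerProfile ha hb]
  exact mul_le_mul_of_nonneg_left
    (jsProfile_le_hellingerProfile (sub_div_add_mem_Icc ha hb)) (by positivity)

end Pair

/-- `4·JS(x,y) ≤ ρ(x,y)² ≤ (4/ln 2)·JS(x,y)` in the positive orthant. -/
theorem js_vs_fisher (n : ℕ) (x y : Fin n → ℝ) (hx : ∀ i, 0 < x i) (hy : ∀ i, 0 < y i) :
    4 * ((1 / 2) * ∑ i, (x i * Real.log (2 * x i / (x i + y i))
          + y i * Real.log (2 * y i / (x i + y i))))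
      ≤ 2 * ∑ i, (Real.sqrt (x i) - Real.sqrt (y i)) ^ 2 ∧
    2 * ∑ i, (Real.sqrt (x i) - Real.sqrt (y i)) ^ 2
      ≤ (4 / Real.log 2) * ((1 / 2) * ∑ i, (x i * Real.log (2 * x i / (x i + y i))
          + y i * Real.log (2 * y i / (x i + y i)))) := by
  have hjs_le : ∑ i, (x i * log (2 * x i / (x i + y i)) + y i * log (2 * y i / (x i + y i)))
      ≤ ∑ i, (√(x i) - √(y i)) ^ 2 :=
    Finset.sum_le_sum fun i _ => mul_log_add_mul_log_le_sq_sqrt_sub_sqrt (hx i).le (hy i).le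
  have hle_js : log 2 * ∑ i, (√(x i) - √(y i)) ^ 2
      ≤ ∑ i, (x i * log (2 * x i / (x i + y i)) + y i * log (2 * y i / (x i + y i))) := by
    rw [Finset.mul_sum]
    exact Finset.sum_le_sum fun i _ => log_two_mul_sq_sqrt_sub_sqrt_le (hx i).le (hy i).le
  refine ⟨by linarith, ?_⟩
  rw [div_mul_eq_mul_div, le_div_iff₀ (log_pos one_lt_two)]
  linarith
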